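/- Assume that the probability vectors (|v₊(e)|²)_{e∈{0,1,2}} and (|v₋(e)|²)_{e∈{0,1,2}} are distinct. Let n ≥ 1 and let η, η' : ℤ/nℤ → {+,−} have the same number of symbols +, and suppose η' is not a cyclic rotation of η (i.e. there is no j ∈ ℤ/nℤ with η'(·) = η(·+j)). Then the measures μ_η and μ_{η'} are mutually singular. -/

import Mathlib

/-!
Each `μ̃_{η,j}` is a product measure, so by the strong law of large numbers the frequency of a
symbol `e` along the progression `r + nℕ` converges `μ̃_{η,j}`-almost surely to `P_{η(j+r)}(e)`.
As `η'` is not a rotation of `η`, for all `j, j'` some `r` has `η(j+r) ≠ η'(j'+r)`; since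
`P₊ ≠ P₋`, the two limits then differ for some `e`, so `μ̃_{η,j} ⟂ μ̃_{η',j'}`. Mutual singularity
passes to the finite mixtures `μ_η` and `μ_{η'}`.
-/

open MeasureTheory
open scoped ENNReal

/-- The two-sided shift on `Σ = {0,1,2}^ℤ`. -/
def shiftMap (ε : ℤ → Fin 3) : ℤ → Fin 3 := fun n => ε (n + 1)

/-- `μ` is the product measure on `{0,1,2}^ℤ` with one-site weights `P n` at coordinate `n`. -/
def IsProductMeasure (μ : Measure (ℤ → Fin 3)) (P : ℤ → Fin 3 → ℝ) : Prop :=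
  ∀ (s : Finset ℤ) (g : ℤ → Fin 3),
    μ {ε | ∀ i ∈ s, ε i = g i} = ∏ i ∈ s, ENNReal.ofReal (P i (g i))

/-- The 3×3 discrete Fourier transform. -/
noncomputable def dft3 : Matrix (Fin 3) (Fin 3) ℂ := fun j k =>
  (((Real.sqrt 3)⁻¹ : ℝ) : ℂ) *
    Complex.exp (-2 * Real.pi * Complex.I * ((j : ℕ) : ℂ) * ((k : ℕ) : ℂ) / 3)

/-- The orthogonal projection of `ℂ³` onto `span(e₀,e₂)`. -/
def pi02 : Matrix (Fin 3) (Fin 3) ℂ := fun i j => if i = j ∧ i ≠ 1 then 1 else 0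

/-- The matrix `F̃₃* = F₃* ∘ π₀₂`. -/
noncomputable def F3tilde : Matrix (Fin 3) (Fin 3) ℂ := dft3.conjTranspose * pi02

/-- The weight `P(e) = |v(e)|²`. -/
noncomputable def Pweight (v : Fin 3 → ℂ) (e : Fin 3) : ℝ := ‖v e‖ ^ 2

/-- The weight `P*(e) = |(F₃v)(e)|²`. -/
noncomputable def PstarWeight (v : Fin 3 → ℂ) (e : Fin 3) : ℝ :=
  ‖dft3.mulVec v e‖ ^ 2

/-- The fraction `t(η)` of symbols `+` in `η`. -/
noncomputable def tplus (n : ℕ) (hn : 0 < n) (η : ZMod n → Bool) : ℝ :=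
  haveI : NeZero n := ⟨hn.ne'⟩
  ((Finset.univ.filter fun j => η j = true).card : ℝ) / n

/-- The decay rate `Λ_η = |λ₋|^{2(1-t(η))}·|λ₊|^{2t(η)}`. -/
noncomputable def LamEta (lp lm : ℂ) (n : ℕ) (hn : 0 < n) (η : ZMod n → Bool) : ℝ :=
  ‖lm‖ ^ (2 * (1 - tplus n hn η)) * ‖lp‖ ^ (2 * tplus n hn η)

/-- The coefficient `C_{η,j} = Π_{m<j} (|λ_{η(m)}|²/Λ_η)`. -/
noncomputable def Cweight (lp lm : ℂ) (n : ℕ) (hn : 0 < n) (η : ZMod n → Bool)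
    (j : ZMod n) : ℝ :=
  haveI : NeZero n := ⟨hn.ne'⟩
  ∏ m ∈ Finset.range j.val,
    (‖if η (m : ZMod n) then lp else lm‖ ^ 2 / LamEta lp lm n hn η)

/-- The family `μ̃_{η,j}`: each `μt j` is the product probability measure whose factor at
coordinate `m ∈ ℤ` is `P_{η(j+m)}` if `m ≥ 0` and `P*_{η(j+m)}` if `m < 0`. -/
def IsTildeFamily (vp vm : Fin 3 → ℂ) (n : ℕ) (hn : 0 < n) (η : ZMod n → Bool)
    (μt : ZMod n → Measure (ℤ → Fin 3)) : Prop :=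
  ∀ j : ZMod n, IsProbabilityMeasure (μt j) ∧
    IsProductMeasure (μt j) (fun m e =>
      if 0 ≤ m then Pweight (if η (j + (m : ZMod n)) then vp else vm) e
      else PstarWeight (if η (j + (m : ZMod n)) then vp else vm) e)

/-- The eigenmeasure `μ_η = 𝒩_η⁻¹ Σ_j C_{η,j} μ̃_{η,j}`. -/
noncomputable def muEta (lp lm : ℂ) (n : ℕ) (hn : 0 < n) (η : ZMod n → Bool)
    (μt : ZMod n → Measure (ℤ → Fin 3)) : Measure (ℤ → Fin 3) :=
  haveI : NeZero n := ⟨hn.ne'⟩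
  (ENNReal.ofReal (∑ j : ZMod n, Cweight lp lm n hn η j))⁻¹ •
    ∑ j : ZMod n, ENNReal.ofReal (Cweight lp lm n hn η j) • μt j

open MeasureTheory ProbabilityTheory Filter Topology

theorem MeasureTheory.Measure.mutuallySingular_of_ae_tendsto {Ω ι β : Type*} [MeasurableSpace Ω]
    [TopologicalSpace β] [T2Space β] {μ ν : Measure Ω} {l : Filter ι} [l.NeBot]
    {f : ι → Ω → β} {b b' : β} (hbb' : b ≠ b') (hμ : ∀ᵐ ω ∂μ, Tendsto (f · ω) l (𝓝 b))
    (hν : ∀ᵐ ω ∂ν, Tendsto (f · ω) l (𝓝 b')) : μ ⟂ₘ ν := by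
  refine .mk (ae_iff.1 hμ) (ae_iff.1 hν) fun ω _ => ?_
  by_contra h
  simp only [Set.mem_union, Set.mem_ofPred_eq, not_or, not_not] at h
  exact hbb' (tendsto_nhds_unique h.1 h.2)

noncomputable def empiricalFreq {Ω α : Type*} [DecidableEq α] (Y : ℕ → Ω → α) (a : α) (N : ℕ)
    (ω : Ω) : ℝ :=
  (∑ k ∈ Finset.range N, if Y k ω = a then 1 else 0) / N

theorem ae_tendsto_empiricalFreq {Ω α : Type*} [MeasurableSpace Ω] [MeasurableSpace α]
    [MeasurableSingletonClass α] [DecidableEq α] {μ : Measure Ω} [IsProbabilityMeasure μ]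
    {Y : ℕ → Ω → α} (hindep : Pairwise fun k l => Y k ⟂ᵢ[μ] Y l)
    (hident : ∀ k, IdentDistrib (Y k) (Y 0) μ μ) (a : α) :
    ∀ᵐ ω ∂μ, Tendsto (fun N => empiricalFreq Y a N ω) atTop (𝓝 (μ.real (Y 0 ⁻¹' {a}))) := by
  set φ : α → ℝ := fun x => if x = a then 1 else 0
  have hφ : Measurable φ := measurable_const.ite (measurableSet_singleton a) measurable_const
  have hY₀ : AEMeasurable (Y 0) μ := (hident 0).aemeasurable_fst
  have hint : Integrable (φ ∘ Y 0) μ := by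
    refine .of_bound (hφ.comp_aemeasurable hY₀).aestronglyMeasurable 1 (.of_forall fun ω => ?_)
    simp only [Function.comp_apply, φ]
    split_ifs <;> norm_num
  have hmean : μ[φ ∘ Y 0] = μ.real (Y 0 ⁻¹' {a}) :=
    calc μ[φ ∘ Y 0] = ∫ x, φ x ∂(μ.map (Y 0)) := (integral_map hY₀ hφ.aestronglyMeasurable).symm
      _ = (μ.map (Y 0)).real {a} := by
        simpa [φ, Set.indicator_apply] using
          integral_indicator_one (μ := μ.map (Y 0)) (measurableSet_singleton a)
      _ = μ.real (Y 0 ⁻¹' {a}) :=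
        map_measureReal_apply_of_aemeasurable hY₀ (measurableSet_singleton a)
  rw [← hmean]
  exact strong_law_ae_real (fun k => φ ∘ Y k) hint
    (fun k l hkl => (hindep hkl).comp hφ hφ) fun k => (hident k).comp hφ

namespace IsProductMeasure

variable {μ ν : Measure (ℤ → Fin 3)} {P Q : ℤ → Fin 3 → ℝ}

theorem measure_eval_eq (hμ : IsProductMeasure μ P) (m : ℤ) (a : Fin 3) :
    μ {ε | ε m = a} = ENNReal.ofReal (P m a) := by
  simpa using hμ {m} fun _ => a

theorem measure_eval_eval_eq (hμ : IsProductMeasure μ P) {m m' : ℤ} (hm : m ≠ m')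
    (a b : Fin 3) :
    μ {ε | ε m = a ∧ ε m' = b} = ENNReal.ofReal (P m a) * ENNReal.ofReal (P m' b) := by
  classical
  have h := hμ {m, m'} fun i => if i = m then a else b
  rw [Finset.prod_pair hm] at h
  simpa [hm.symm] using h

theorem indepFun_eval (hμ : IsProductMeasure μ P) [IsFiniteMeasure μ] {m m' : ℤ}
    (hm : m ≠ m') : (fun ε : ℤ → Fin 3 => ε m) ⟂ᵢ[μ] fun ε => ε m' := by
  have hmeas : ∀ i : ℤ, Measurable fun ε : ℤ → Fin 3 => ε i := measurable_pi_apply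
  rw [indepFun_iff_map_prod_eq_prod_map_map (hmeas m).aemeasurable (hmeas m').aemeasurable]
  refine Measure.ext_of_singleton fun ⟨a, b⟩ => ?_
  rw [← Set.singleton_prod_singleton, Measure.prod_prod,
    Measure.map_apply ((hmeas m).prodMk (hmeas m'))
      ((measurableSet_singleton a).prod (measurableSet_singleton b)),
    Measure.map_apply (hmeas m) (measurableSet_singleton _),
    Measure.map_apply (hmeas m') (measurableSet_singleton _)]
  exact (hμ.measure_eval_eval_eq hm a b).trans
    (congr_arg₂ (· * ·) (hμ.measure_eval_eq m a) (hμ.measure_eval_eq m' b)).symm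

theorem identDistrib_eval (hμ : IsProductMeasure μ P) {m m' : ℤ} (hP : P m = P m') :
    IdentDistrib (fun ε : ℤ → Fin 3 => ε m) (fun ε => ε m') μ μ := by
  have hmeas : ∀ i : ℤ, Measurable fun ε : ℤ → Fin 3 => ε i := measurable_pi_apply
  refine ⟨(hmeas m).aemeasurable, (hmeas m').aemeasurable, Measure.ext_of_singleton fun a => ?_⟩
  rw [Measure.map_apply (hmeas m) (measurableSet_singleton _),
    Measure.map_apply (hmeas m') (measurableSet_singleton _)]
  exact (hμ.measure_eval_eq m a).trans (hP ▸ (hμ.measure_eval_eq m' a).symm)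

theorem ae_tendsto_empiricalFreq_eval (hμ : IsProductMeasure μ P) [IsProbabilityMeasure μ]
    {pos : ℕ → ℤ} (hpos : Function.Injective pos) {p : Fin 3 → ℝ} (hP : ∀ k, P (pos k) = p)
    {e : Fin 3} (hpe : 0 ≤ p e) :
    ∀ᵐ ε ∂μ, Tendsto (fun N => empiricalFreq (fun k ε => ε (pos k)) e N ε) atTop (𝓝 (p e)) := by
  have hlim : μ.real {ε | ε (pos 0) = e} = p e := by
    rw [measureReal_def, hμ.measure_eval_eq, hP, ENNReal.toReal_ofReal hpe]
  rw [← hlim]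
  exact ae_tendsto_empiricalFreq (fun k l hkl => hμ.indepFun_eval (hpos.ne hkl))
    (fun k => hμ.identDistrib_eval ((hP k).trans (hP 0).symm)) e

theorem mutuallySingular (hμ : IsProductMeasure μ P) (hν : IsProductMeasure ν Q)
    [IsProbabilityMeasure μ] [IsProbabilityMeasure ν] {pos : ℕ → ℤ}
    (hpos : Function.Injective pos) {p q : Fin 3 → ℝ} (hP : ∀ k, P (pos k) = p)
    (hQ : ∀ k, Q (pos k) = q) (hp : 0 ≤ p) (hq : 0 ≤ q) (hpq : p ≠ q) : μ ⟂ₘ ν := by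
  obtain ⟨e, he⟩ := Function.ne_iff.1 hpq
  exact Measure.mutuallySingular_of_ae_tendsto he
    (hμ.ae_tendsto_empiricalFreq_eval hpos hP (hp e))
    (hν.ae_tendsto_empiricalFreq_eval hpos hQ (hq e))

end IsProductMeasure

theorem exists_add_ne_of_not_exists_rotation {G β : Type*} [AddCommGroup G] {f g : G → β}
    (h : ¬∃ c, ∀ x, g x = f (x + c)) (a b : G) : ∃ x, f (a + x) ≠ g (b + x) := by
  by_contra! hfg
  refine h ⟨a - b, fun x => ?_⟩
  have hx := hfg (x - b)
  rw [add_sub_cancel] at hx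
  rw [← hx]
  congr 1
  abel

theorem IsTildeFamily.mutuallySingular {vp vm : Fin 3 → ℂ} {n : ℕ} {hn : 0 < n}
    {η η' : ZMod n → Bool} {μt μt' : ZMod n → Measure (ℤ → Fin 3)}
    (hfam : IsTildeFamily vp vm n hn η μt) (hfam' : IsTildeFamily vp vm n hn η' μt')
    (hdiff : Pweight vp ≠ Pweight vm) {j j' : ZMod n} {r : ℕ} (hr : η (j + r) ≠ η' (j' + r)) :
    μt j ⟂ₘ μt' j' := by
  set pos : ℕ → ℤ := fun k => r + k * n
  have hpos : Function.Injective pos := fun k l h => by simpa [pos, hn.ne'] using h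
  have hpos_nonneg : ∀ k, 0 ≤ pos k := fun k => by positivity
  have hpos_cast : ∀ k, ((pos k : ℤ) : ZMod n) = r := fun k => by simp [pos]
  have := (hfam j).1
  have := (hfam' j').1
  refine (hfam j).2.mutuallySingular (hfam' j').2 hpos
    (p := Pweight (if η (j + r) then vp else vm)) (q := Pweight (if η' (j' + r) then vp else vm))
    (fun k => ?_) (fun k => ?_) (fun _ => sq_nonneg _) (fun _ => sq_nonneg _) ?_
  · funext e
    simp only [if_pos (hpos_nonneg k), hpos_cast]
  · funext e
    simp only [if_pos (hpos_nonneg k), hpos_cast]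
  · revert hr
    cases η (j + r) <;> cases η' (j' + r) <;> simp [hdiff, hdiff.symm]

theorem muEta_mutuallySingular_of_forall {lp lm : ℂ} {n : ℕ} {hn : 0 < n}
    {η η' : ZMod n → Bool} {μt μt' : ZMod n → Measure (ℤ → Fin 3)}
    (h : ∀ j j', μt j ⟂ₘ μt' j') : muEta lp lm n hn η μt ⟂ₘ muEta lp lm n hn η' μt' := by
  have : NeZero n := ⟨hn.ne'⟩
  refine .smul _ (.symm (.smul _ (.symm ?_)))
  rw [← Measure.sum_fintype, ← Measure.sum_fintype]
  exact Measure.MutuallySingular.sum_left.2 fun j => Measure.MutuallySingular.sum_right.2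
    fun j' => (((h j j').smul _).symm.smul _).symm

theorem muEta_mutuallySingular_general
    (lp lm : ℂ) (vp vm : Fin 3 → ℂ)
    (hdiff : (fun e => ‖vp e‖ ^ 2) ≠ fun e => ‖vm e‖ ^ 2)
    (n : ℕ) (hn : 0 < n) (η η' : ZMod n → Bool)
    (hnotcyc : ¬ ∃ j : ZMod n, ∀ i : ZMod n, η' i = η (i + j))
    (μt μt' : ZMod n → Measure (ℤ → Fin 3))
    (hfam : IsTildeFamily vp vm n hn η μt) (hfam' : IsTildeFamily vp vm n hn η' μt') :
    (muEta lp lm n hn η μt).MutuallySingular (muEta lp lm n hn η' μt') := by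
  have : NeZero n := ⟨hn.ne'⟩
  refine muEta_mutuallySingular_of_forall fun j j' => ?_
  obtain ⟨ρ, hρ⟩ := exists_add_ne_of_not_exists_rotation hnotcyc j j'
  rw [← ZMod.natCast_zmod_val ρ] at hρ
  exact hfam.mutuallySingular hfam' hdiff hρ

/-- If the probability vectors `(|v₊(e)|²)` and `(|v₋(e)|²)` are
distinct, and `η, η'` have the same number of `+` symbols but are not cyclic rotations of
one another, then `μ_η` and `μ_{η'}` are mutually singular. -/
theorem muEta_mutuallySingular
    (lp lm : ℂ) (hlp : lp ≠ 0) (hlm : lm ≠ 0) (vp vm : Fin 3 → ℂ)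
    (hvp : F3tilde.mulVec vp = lp • vp) (hvm : F3tilde.mulVec vm = lm • vm)
    (hvpu : ∑ e, ‖vp e‖ ^ 2 = 1) (hvmu : ∑ e, ‖vm e‖ ^ 2 = 1)
    (hdiff : (fun e => ‖vp e‖ ^ 2) ≠ fun e => ‖vm e‖ ^ 2)
    (n : ℕ) (hn : 0 < n) (η η' : ZMod n → Bool)
    (hsame : haveI : NeZero n := ⟨hn.ne'⟩
      (Finset.univ.filter fun j => η j = true).card
        = (Finset.univ.filter fun j => η' j = true).card)
    (hnotcyc : ¬ ∃ j : ZMod n, ∀ i : ZMod n, η' i = η (i + j))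
    (μt μt' : ZMod n → Measure (ℤ → Fin 3))
    (hfam : IsTildeFamily vp vm n hn η μt) (hfam' : IsTildeFamily vp vm n hn η' μt') :
    (muEta lp lm n hn η μt).MutuallySingular (muEta lp lm n hn η' μt') :=
  muEta_mutuallySingular_general lp lm vp vm hdiff n hn η η' hnotcyc μt μt' hfam hfam'
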